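/- Let K be a finite abstract simplicial complex and let v be a vertex of K. Then v is dominated by some vertex of K if and only if the intersection of all maximal simplices of K containing v contains a vertex other than v, i.e., (⋂_{σ ∈ M_K(v)} σ) \ {v} ≠ ∅. -/

import Mathlib

/-- `K` is an abstract simplicial complex: every member is nonempty and every
nonempty subset of a member belongs to `K`. -/
def IsComplex {V : Type*} (K : Set (Finset V)) : Prop :=
  (∀ σ ∈ K, σ.Nonempty) ∧ ∀ σ ∈ K, ∀ τ : Finset V, τ ⊆ σ → τ.Nonempty → τ ∈ K

/-- `v` is a vertex of `K`. -/
def IsVertex {V : Type*} (K : Set (Finset V)) (v : V) : Prop := {v} ∈ K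

/-- `σ` is a maximal simplex of `K`. -/
def IsMaximalSimplex {V : Type*} (K : Set (Finset V)) (σ : Finset V) : Prop :=
  σ ∈ K ∧ ∀ τ ∈ K, σ ⊆ τ → σ = τ

/-- The link of the vertex `v` in `K`. -/
def link {V : Type*} [DecidableEq V] (K : Set (Finset V)) (v : V) : Set (Finset V) :=
  {τ | τ ∈ K ∧ v ∉ τ ∧ τ ∪ {v} ∈ K}

/-- `v` is dominated by the vertex `v' ≠ v`: the link of `v` is a cone with apex `v'`. -/
def Dominated {V : Type*} [DecidableEq V] (K : Set (Finset V)) (v v' : V) : Prop :=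
  v' ≠ v ∧ ({v'} : Finset V) ∈ link K v ∧ ∀ τ ∈ link K v, τ ∪ {v'} ∈ link K v

/-- `M_K(v)`: the set of maximal simplices of `K` containing the vertex `v`. -/
def MK {V : Type*} (K : Set (Finset V)) (v : V) : Set (Finset V) :=
  {σ | IsMaximalSimplex K σ ∧ v ∈ σ}

/-!
Both conditions say that the closed star of `v` is a cone with apex `v'`, i.e. that
`insert v' ρ ∈ K` for every simplex `ρ ∋ v`. For domination this is seen by passing
between `ρ` and `ρ.erase v ∈ link K v`; for the maximal simplices `σ ∋ v`, maximality
forces `insert v' σ = σ`, and conversely every `ρ ∋ v` lies in such a `σ` because `K`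
is finite.
-/

section

variable {V : Type*} {K : Set (Finset V)}

lemma exists_isMaximalSimplex_superset (hfin : K.Finite) {σ : Finset V} (hσ : σ ∈ K) :
    ∃ τ, IsMaximalSimplex K τ ∧ σ ⊆ τ := by
  have hs : {τ ∈ K | σ ⊆ τ}.Finite := hfin.subset fun _ hτ => hτ.1
  obtain ⟨τ, hτ, hmax⟩ := hs.exists_maximalFor Finset.card _ ⟨σ, hσ, subset_rfl⟩
  refine ⟨τ, ⟨hτ.1, fun ρ hρ hτρ => ?_⟩, hτ.2⟩
  exact Finset.eq_of_subset_of_card_le hτρ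
    (hmax ⟨hρ, hτ.2.trans hτρ⟩ (Finset.card_le_card hτρ))

lemma forall_insert_mem_iff_forall_mem_of_mem_MK (hK : IsComplex K) (hfin : K.Finite)
    [DecidableEq V] {v v' : V} :
    (∀ ρ ∈ K, v ∈ ρ → insert v' ρ ∈ K) ↔ ∀ σ ∈ MK K v, v' ∈ σ := by
  constructor
  · rintro h σ ⟨hσ, hvσ⟩
    rw [hσ.2 _ (h σ hσ.1 hvσ) (Finset.subset_insert v' σ)]
    exact Finset.mem_insert_self v' σ
  · intro h ρ hρ hvρ
    obtain ⟨σ, hσ, hρσ⟩ := exists_isMaximalSimplex_superset hfin hρ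
    exact hK.2 σ hσ.1 _ (Finset.insert_subset (h σ ⟨hσ, hρσ hvρ⟩) hρσ)
      (Finset.insert_nonempty v' ρ)

section Link

variable [DecidableEq V]

lemma mem_link_iff {v : V} {τ : Finset V} :
    τ ∈ link K v ↔ τ ∈ K ∧ v ∉ τ ∧ insert v τ ∈ K := by
  rw [Finset.insert_eq, Finset.union_comm]
  rfl

lemma erase_mem_link (hK : IsComplex K) {v : V} {ρ : Finset V} (hρ : ρ ∈ K) (hvρ : v ∈ ρ)
    (hne : (ρ.erase v).Nonempty) : ρ.erase v ∈ link K v :=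
  mem_link_iff.2 ⟨hK.2 ρ hρ _ (Finset.erase_subset v ρ) hne, Finset.notMem_erase v ρ,
    by rwa [Finset.insert_erase hvρ]⟩

lemma dominated_iff_forall_insert_mem (hK : IsComplex K) {v : V} (hv : IsVertex K v) {v' : V} :
    Dominated K v v' ↔ v' ≠ v ∧ ∀ ρ ∈ K, v ∈ ρ → insert v' ρ ∈ K := by
  simp only [Dominated, mem_link_iff, ← Finset.insert_eq, Finset.union_comm _ {v'}]
  constructor
  · rintro ⟨hne, ⟨-, -, hedge⟩, hcone⟩
    refine ⟨hne, fun ρ hρ hvρ => ?_⟩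
    obtain hempty | hne' := (ρ.erase v).eq_empty_or_nonempty
    · obtain rfl : ρ = {v} := ((Finset.erase_eq_empty_iff ρ v).1 hempty).resolve_left
        (Finset.ne_empty_of_mem hvρ)
      rwa [Finset.pair_comm] at hedge
    · have := (hcone _ (mem_link_iff.1 (erase_mem_link hK hρ hvρ hne'))).2.2
      rwa [Finset.insert_comm, Finset.insert_erase hvρ] at this
  · rintro ⟨hne, hcone⟩
    have hedge : insert v' {v} ∈ K := hcone {v} hv (Finset.mem_singleton_self v)
    refine ⟨hne, ⟨hK.2 _ hedge _ (by simp) (Finset.singleton_nonempty v'), by simpa using hne.symm,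
      by rwa [Finset.pair_comm]⟩, fun τ ⟨_, hvτ, hτv⟩ => ?_⟩
    have hbig := hcone _ hτv (Finset.mem_insert_self v τ)
    refine ⟨hK.2 _ hbig _ (Finset.insert_subset_insert v' (Finset.subset_insert v τ))
      (Finset.insert_nonempty v' τ), by simp [hne.symm, hvτ], by rwa [Finset.insert_comm]⟩

end Link

end

/-- A vertex `v` of a finite complex `K` is dominated by some vertex iff the
intersection of all maximal simplices containing `v` contains a vertex other
than `v`. -/
theorem dominated_iff_inter_nontrivial {V : Type*} [DecidableEq V]
    (K : Set (Finset V)) (hK : IsComplex K) (hfin : K.Finite)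
    (v : V) (hv : IsVertex K v) :
    (∃ v' : V, Dominated K v v') ↔
      ((⋂ σ ∈ MK K v, (σ : Set V)) \ {v}).Nonempty := by
  simp only [dominated_iff_forall_insert_mem hK hv,
    forall_insert_mem_iff_forall_mem_of_mem_MK hK hfin]
  constructor
  · rintro ⟨v', hne, hv'⟩
    exact ⟨v', Set.mem_iInter₂.2 hv', hne⟩
  · rintro ⟨v', hv', hne⟩
    exact ⟨v', hne, Set.mem_iInter₂.1 hv'⟩
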